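/- Fix an integer N > 1. If A = {a₁ < … < a_N} is the leading term of a KdV subset, then ∑_{i=1}^{N} a_i = N(N−1)/2. -/

import Mathlib

/-- A subset `S ⊆ ℤ` is of virtual cardinal zero if both `S \ ℤ≥0` and `ℤ≥0 \ S`
are finite and have the same cardinality. -/
def VirtualCardZero (S : Set ℤ) : Prop :=
  (S \ {n : ℤ | 0 ≤ n}).Finite ∧ ({n : ℤ | 0 ≤ n} \ S).Finite ∧
    (S \ {n : ℤ | 0 ≤ n}).ncard = ({n : ℤ | 0 ≤ n} \ S).ncard

/-- The shift `S + k = {s + k : s ∈ S}` of a set of integers. -/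
def shiftSet (S : Set ℤ) (k : ℤ) : Set ℤ := (fun s => s + k) '' S

/-- A KdV subset (for a fixed `N`): a subset `S ⊆ ℤ` of virtual cardinal zero
such that `S + N ⊆ S`. -/
def IsKdV (N : ℕ) (S : Set ℤ) : Prop :=
  VirtualCardZero S ∧ shiftSet S N ⊆ S

/-- `A` is the leading term of the KdV subset `S`: `A` is an `N`-element set with
`S = A ∪ (S+N)` and `A ∩ (S+N) = ∅`. -/
def IsLeadingTerm (N : ℕ) (S : Set ℤ) (A : Finset ℤ) : Prop :=
  A.card = N ∧ (↑A : Set ℤ) ∪ shiftSet S N = S ∧ (↑A : Set ℤ) ∩ shiftSet S N = ∅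

/-- The mutation `S[a] = {a+1−N} ∪ (S+1)` of a KdV subset `S` at an element `a`
of its leading term. -/
def mutate (N : ℕ) (S : Set ℤ) (a : ℤ) : Set ℤ :=
  {a + 1 - (N : ℤ)} ∪ shiftSet S 1

/-!
For `a ∈ A` we have `a - N ∉ S`, so by `S + N ⊆ S` the progression `a + j N` lies in `S` exactly
for `j ≥ 0`. Two elements of `A` in the same class mod `N` would then each lie above the other, so
`A`, having `N` elements, is a complete residue system and every integer is uniquely `a + j N`.
With `q_a = ⌊a / N⌋`, the progression through `a` has `max(-q_a, 0)` negative elements in `S` and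
`max(q_a, 0)` non-negative ones outside `S`, so virtual cardinal zero says `∑ q_a = 0`. Hence
`∑ a = N ∑ q_a + ∑ (a mod N) = 0 + 1 + ⋯ + (N - 1)`.
-/

open Finset

lemma mem_shiftSet {S : Set ℤ} {k x : ℤ} : x ∈ shiftSet S k ↔ x - k ∈ S :=
  ⟨by rintro ⟨s, hs, rfl⟩; simpa using hs, fun h => ⟨x - k, h, by ring⟩⟩

lemma add_natCast_mul_mem {N : ℕ} {S : Set ℤ} (hS : shiftSet S N ⊆ S) {x : ℤ} (hx : x ∈ S)
    (j : ℕ) : x + j * N ∈ S := by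
  induction j with
  | zero => simpa using hx
  | succ j ih =>
    have h := hS ⟨_, ih, rfl⟩
    push_cast
    rwa [add_one_mul, ← add_assoc]

lemma sum_eq_zero_of_sum_toNat_eq {ι : Type*} (s : Finset ι) (f : ι → ℤ)
    (h : ∑ i ∈ s, (f i).toNat = ∑ i ∈ s, (-f i).toNat) : ∑ i ∈ s, f i = 0 := by
  have h' := congrArg (Nat.cast : ℕ → ℤ) h
  push_cast at h'
  rw [← sum_congr rfl fun i _ => Int.toNat_sub_toNat_neg (f i), sum_sub_distrib, h', sub_self]

lemma nonneg_add_mul_iff {N : ℕ} (hN : 0 < N) (a j : ℤ) : 0 ≤ a + j * N ↔ -(a / N) ≤ j := by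
  rw [← Int.ediv_nonneg_iff_of_pos (by exact_mod_cast hN : (0 : ℤ) < N),
    Int.add_mul_ediv_right _ _ (by exact_mod_cast hN.ne' : (N : ℤ) ≠ 0)]
  omega

def IsCompleteResidueSystem (N : ℕ) (A : Finset ℤ) : Prop :=
  ∀ x : ℤ, ∃! a ∈ A, a ≡ x [ZMOD N]

namespace IsCompleteResidueSystem

variable {N : ℕ} {A : Finset ℤ}

lemma exists_add_mul_eq (hA : IsCompleteResidueSystem N A) (x : ℤ) :
    ∃ a ∈ A, ∃ j : ℤ, a + j * N = x := by
  obtain ⟨a, ⟨ha, hax⟩, -⟩ := hA x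
  obtain ⟨j, hj⟩ := hax.dvd
  exact ⟨a, ha, j, by linarith⟩

lemma add_mul_inj (hA : IsCompleteResidueSystem N A) (hN : 0 < N) {a c j k : ℤ} (ha : a ∈ A)
    (hc : c ∈ A) (h : a + j * N = c + k * N) : a = c ∧ j = k := by
  have hmod : ∀ b i : ℤ, b ≡ b + i * N [ZMOD N] := fun b i =>
    (Int.add_mul_emod_self_right b i N).symm
  obtain rfl : a = c := (hA (a + j * N)).unique ⟨ha, hmod a j⟩ ⟨hc, h ▸ hmod c k⟩
  exact ⟨rfl, mul_right_cancel₀ (by exact_mod_cast hN.ne' : (N : ℤ) ≠ 0) (by linarith)⟩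

lemma ncard_eq_sum_card (hA : IsCompleteResidueSystem N A) (hN : 0 < N) (s : Set ℤ)
    (t : ℤ → Finset ℤ) (hst : ∀ a ∈ A, ∀ j : ℤ, a + j * N ∈ s ↔ j ∈ t a) :
    s.ncard = ∑ a ∈ A, #(t a) := by
  let θ : (Σ _ : ℤ, ℤ) → ℤ := fun p => p.1 + p.2 * N
  have hθ : Set.InjOn θ ↑(A.sigma t) := by
    rintro ⟨a, j⟩ hp ⟨c, k⟩ hq h
    obtain ⟨rfl, rfl⟩ := hA.add_mul_inj hN (mem_sigma.1 hp).1 (mem_sigma.1 hq).1 h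
    rfl
  have hs : s = ↑((A.sigma t).image θ) := by
    ext x
    obtain ⟨a, ha, j, rfl⟩ := hA.exists_add_mul_eq x
    rw [hst a ha j, coe_image, Set.mem_image]
    constructor
    · exact fun hj => ⟨⟨a, j⟩, mem_sigma.2 ⟨ha, hj⟩, rfl⟩
    · rintro ⟨⟨c, k⟩, hck, h⟩
      obtain ⟨rfl, rfl⟩ := hA.add_mul_inj hN (mem_sigma.1 hck).1 ha h
      exact (mem_sigma.1 hck).2
  rw [hs, Set.ncard_coe_finset, card_image_of_injOn hθ, card_sigma]

lemma sum_emod (hA : IsCompleteResidueSystem N A) (hN : 0 < N) :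
    ∑ a ∈ A, a % N = ∑ i ∈ range N, (i : ℤ) := by
  have hNz : (0 : ℤ) < N := by exact_mod_cast hN
  refine sum_nbij (fun a => (a % N).toNat) (fun a _ => ?_) (fun a ha c hc h => ?_)
    (fun i hi => ?_) (fun a _ => (Int.toNat_of_nonneg (Int.emod_nonneg a hNz.ne')).symm)
  · have := Int.emod_lt_of_pos a hNz
    rw [mem_range]
    omega
  · have := Int.emod_nonneg a hNz.ne'
    have := Int.emod_nonneg c hNz.ne'
    refine (hA c).unique ⟨ha, ?_⟩ ⟨hc, rfl⟩
    simp only at h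
    show a % N = c % N
    omega
  · obtain ⟨a, ⟨ha, hai⟩, -⟩ := hA i
    refine ⟨a, ha, ?_⟩
    simp only
    rw [hai.eq, Int.emod_eq_of_lt (Int.natCast_nonneg i) (by exact_mod_cast mem_range.1 hi),
      Int.toNat_natCast]

end IsCompleteResidueSystem

namespace IsLeadingTerm

variable {N : ℕ} {S : Set ℤ} {A : Finset ℤ}

lemma subset (hA : IsLeadingTerm N S A) : ↑A ⊆ S :=
  hA.2.1 ▸ Set.subset_union_left

lemma sub_notMem (hA : IsLeadingTerm N S A) {a : ℤ} (ha : a ∈ A) : a - N ∉ S := fun h =>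
  (Set.eq_empty_iff_forall_notMem.1 hA.2.2) a ⟨ha, mem_shiftSet.2 h⟩

lemma add_mul_mem_iff (hA : IsLeadingTerm N S A) (hS : shiftSet S N ⊆ S) {a : ℤ} (ha : a ∈ A)
    (j : ℤ) : a + j * N ∈ S ↔ 0 ≤ j := by
  refine ⟨fun h => ?_, fun hj => ?_⟩
  · by_contra! hj
    have h' := add_natCast_mul_mem hS h (-j - 1).toNat
    rw [Int.toNat_of_nonneg (by omega)] at h'
    exact hA.sub_notMem ha (by convert h' using 1; ring)
  · lift j to ℕ using hj
    exact add_natCast_mul_mem hS (hA.subset ha) j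

lemma eq_of_modEq (hA : IsLeadingTerm N S A) (hS : shiftSet S N ⊆ S) {a c : ℤ} (ha : a ∈ A)
    (hc : c ∈ A) (h : a ≡ c [ZMOD N]) : a = c := by
  obtain ⟨j, hj⟩ := h.dvd
  have h₁ := (hA.add_mul_mem_iff hS ha j).1 (by convert hA.subset hc using 1; linarith)
  have h₂ := (hA.add_mul_mem_iff hS hc (-j)).1 (by convert hA.subset ha using 1; linarith)
  have hj0 : j = 0 := by omega
  subst hj0
  linarith

lemma isCompleteResidueSystem (hA : IsLeadingTerm N S A) (hS : shiftSet S N ⊆ S) (hN : 0 < N) :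
    IsCompleteResidueSystem N A := by
  intro x
  have hNz : (0 : ℤ) < N := by exact_mod_cast hN
  have hsurj := surj_on_of_inj_on_of_card_le (s := A) (t := Ico 0 (N : ℤ)) (fun a _ => a % N)
    (fun a _ => mem_Ico.2 ⟨Int.emod_nonneg a hNz.ne', Int.emod_lt_of_pos a hNz⟩)
    (fun a c ha hc h => hA.eq_of_modEq hS ha hc h) (by simp [hA.1])
  obtain ⟨a, ha, hax⟩ := hsurj (x % N)
    (mem_Ico.2 ⟨Int.emod_nonneg x hNz.ne', Int.emod_lt_of_pos x hNz⟩)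
  exact ⟨a, ⟨ha, hax.symm⟩, fun c hc => hA.eq_of_modEq hS hc.1 ha (hc.2.trans hax)⟩

lemma ncard_diff_nonneg (hA : IsLeadingTerm N S A) (hS : shiftSet S N ⊆ S) (hN : 0 < N) :
    (S \ {n : ℤ | 0 ≤ n}).ncard = ∑ a ∈ A, (-(a / N)).toNat := by
  rw [(hA.isCompleteResidueSystem hS hN).ncard_eq_sum_card hN _
    (fun a => Ico 0 (-(a / N)))]
  · simp only [Int.card_Ico, sub_zero]
  · intro a ha j
    rw [Set.mem_sdiff, Set.mem_ofPred_eq, hA.add_mul_mem_iff hS ha, nonneg_add_mul_iff hN, mem_Ico]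
    omega

lemma ncard_nonneg_diff (hA : IsLeadingTerm N S A) (hS : shiftSet S N ⊆ S) (hN : 0 < N) :
    ({n : ℤ | 0 ≤ n} \ S).ncard = ∑ a ∈ A, (a / N).toNat := by
  rw [(hA.isCompleteResidueSystem hS hN).ncard_eq_sum_card hN _
    (fun a => Ico (-(a / N)) 0)]
  · simp only [Int.card_Ico, zero_sub, neg_neg]
  · intro a ha j
    rw [Set.mem_sdiff, Set.mem_ofPred_eq, hA.add_mul_mem_iff hS ha, nonneg_add_mul_iff hN, mem_Ico]
    omega

end IsLeadingTerm

theorem leadingTerm_sum_general (N : ℕ) (S : Set ℤ) (hS : IsKdV N S)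
    (A : Finset ℤ) (hA : IsLeadingTerm N S A) :
    ∑ a ∈ A, a = (N : ℤ) * ((N : ℤ) - 1) / 2 := by
  obtain rfl | hN := N.eq_zero_or_pos
  · simp [card_eq_zero.1 hA.1]
  obtain ⟨⟨-, -, hcard⟩, hshift⟩ := hS
  have hquot : ∑ a ∈ A, a / (N : ℤ) = 0 := sum_eq_zero_of_sum_toNat_eq A _ <| by
    rw [← hA.ncard_diff_nonneg hshift hN, ← hA.ncard_nonneg_diff hshift hN, hcard]
  have hgauss : (∑ i ∈ range N, (i : ℤ)) * 2 = N * (N - 1) := by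
    have h := congrArg (Nat.cast : ℕ → ℤ) (sum_range_id_mul_two N)
    push_cast [Nat.cast_sub hN] at h
    exact h
  calc ∑ a ∈ A, a = ∑ a ∈ A, ((N : ℤ) * (a / N) + a % N) :=
        sum_congr rfl fun a _ => (Int.mul_ediv_add_emod a N).symm
    _ = N * ∑ a ∈ A, a / (N : ℤ) + ∑ i ∈ range N, (i : ℤ) := by
        rw [sum_add_distrib, mul_sum, (hA.isCompleteResidueSystem hshift hN).sum_emod hN]
    _ = N * (N - 1) / 2 := by
        rw [hquot, mul_zero, zero_add, ← hgauss, Int.mul_ediv_cancel _ two_ne_zero]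

/-- Fix `N > 1`.  If `A` is the leading term of a KdV subset, then
`∑_{a ∈ A} a = N(N−1)/2`. -/
theorem leadingTerm_sum (N : ℕ) (hN : 1 < N) (S : Set ℤ) (hS : IsKdV N S)
    (A : Finset ℤ) (hA : IsLeadingTerm N S A) :
    ∑ a ∈ A, a = (N : ℤ) * ((N : ℤ) - 1) / 2 :=
  leadingTerm_sum_general N S hS A hA
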